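/- Let q > p > 2 and 0 < M < M_b = ((q-p+1)/(q-p))·((q-p+1)/(p-1))^{-1/(q-p+1)}. Then any C^2 solution V of (|V'|^{p-2}V')' + |V'|^q = 0 on (0,1) with V(0)=0, V(1)=M equals V_k(x) = M_b((x+k)^{(q-p)/(q-p+1)} − k^{(q-p)/(q-p+1)}) for the unique k > 0 with V_k(1) = M; in particular V extends to a C^1 function on [0,1] with V'(0) finite. -/

import Mathlib

/-!
Write `u = V'` and `φ = |u|^(p-2) u`. The equation says `φ' = -|φ|^γ` with `γ = q/(p-1) > 1`;
this right-hand side is locally Lipschitz, so by uniqueness for this ODE `φ` vanishes either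
nowhere or identically on `(0,1)`. By the mean value theorem `u = M > 0` somewhere, hence `φ > 0`
throughout, and then `φ^(1-γ)` has constant derivative `γ - 1`, i.e. `φ^(1-γ) = (γ-1)(x+k)`.
Solving for `u` gives `u = M_b A (x+k)^(A-1)` with `A = (q-p)/(q-p+1)`, and integrating from
`V 0 = 0` gives `V = V_k`. As `k ↦ (1+k)^A - k^A` is strictly decreasing, `V 1 = M` fixes `k`.
-/

open Set Filter Topology

lemma hasDerivAt_abs_rpow_mul {r : ℝ} (hr : 0 < r) (t : ℝ) :
    HasDerivAt (fun s : ℝ => |s| ^ r * s) ((r + 1) * |t| ^ r) t := by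
  have hpow : ∀ s : ℝ, 0 < s → s ^ r * s = s ^ (r + 1) := fun s hs =>
    (Real.rpow_add_one hs.ne' r).symm
  rcases lt_trichotomy t 0 with ht | rfl | ht
  · have h := ((Real.hasDerivAt_rpow_const (p := r + 1) (.inl (neg_ne_zero.2 ht.ne))).comp t
      (hasDerivAt_neg t)).neg
    refine (h.congr_deriv (by simp [abs_of_neg ht])).congr_of_eventuallyEq ?_
    filter_upwards [Iio_mem_nhds ht] with s (hs : s < 0)
    simp [abs_of_neg hs, ← hpow (-s) (neg_pos.2 hs)]
  · have hcont : Tendsto (fun s : ℝ => |s| ^ r) (𝓝 0) (𝓝 0) :=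
      (continuous_abs.rpow_const fun _ => .inr hr.le).tendsto' 0 0 (by simp [hr.ne'])
    rw [hasDerivAt_iff_tendsto_slope, abs_zero, Real.zero_rpow hr.ne', mul_zero]
    refine (hcont.mono_left nhdsWithin_le_nhds).congr' ?_
    filter_upwards [self_mem_nhdsWithin] with s (hs : s ≠ 0)
    simp [slope_def_field, hs]
  · refine ((Real.hasDerivAt_rpow_const (p := r + 1) (.inl ht.ne')).congr_deriv
      (by simp [abs_of_pos ht])).congr_of_eventuallyEq ?_
    filter_upwards [Ioi_mem_nhds ht] with s (hs : 0 < s)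
    simp [abs_of_pos hs, hpow s hs]

lemma abs_abs_rpow_mul {r : ℝ} (hr : r + 1 ≠ 0) (s : ℝ) : |(|s| ^ r * s)| = |s| ^ (r + 1) := by
  rcases eq_or_ne s 0 with rfl | hs
  · simp [Real.zero_rpow hr]
  · rw [abs_mul, abs_of_nonneg (by positivity), Real.rpow_add_one (abs_ne_zero.2 hs)]

lemma abs_rpow_mul_pos_iff (r s : ℝ) : 0 < |s| ^ r * s ↔ 0 < s := by
  refine ⟨fun h => ?_, fun h => by positivity⟩
  by_contra! hs
  exact h.not_ge (mul_nonpos_of_nonneg_of_nonpos (by positivity) hs)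

lemma exists_lipschitzOnWith_neg_abs_rpow {γ : ℝ} (hγ : 1 < γ) (R : ℝ) :
    ∃ K, LipschitzOnWith K (fun x : ℝ => -|x| ^ γ) (Metric.closedBall 0 R) := by
  simpa only [Real.norm_eq_abs] using
    (contDiff_norm_rpow (E := ℝ) hγ).neg.contDiffOn.exists_lipschitzOnWith one_ne_zero
      (convex_closedBall 0 R) (isCompact_closedBall 0 R)

lemma eqOn_zero_of_hasDerivAt_neg_abs_rpow {γ a b t₀ : ℝ} {φ : ℝ → ℝ} (hγ : 1 < γ)
    (hφ : ∀ t ∈ Ioo a b, HasDerivAt φ (-|φ t| ^ γ) t) (ht₀ : t₀ ∈ Ioo a b) (hφt₀ : φ t₀ = 0) :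
    EqOn φ 0 (Ioo a b) := by
  intro y hy
  set a' := (a + min t₀ y) / 2 with ha'
  set b' := (max t₀ y + b) / 2 with hb'
  have hmin := lt_min ht₀.1 hy.1
  have hmax := max_lt ht₀.2 hy.2
  have hsub : Icc a' b' ⊆ Ioo a b := fun t ht => ⟨by linarith [ht.1], by linarith [ht.2]⟩
  obtain ⟨R, hR⟩ := isCompact_Icc.exists_bound_of_continuousOn
    (HasDerivAt.continuousOn fun t ht => hφ t (hsub ht))
  obtain ⟨K, hK⟩ := exists_lipschitzOnWith_neg_abs_rpow hγ R
  have hzero : ∀ t : ℝ, HasDerivAt (0 : ℝ → ℝ) (-|(0 : ℝ → ℝ) t| ^ γ) t := fun t => by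
    simp only [Pi.zero_apply, abs_zero, Real.zero_rpow (by linarith : γ ≠ 0), neg_zero]
    exact hasDerivAt_const t 0
  have ht₀' : t₀ ∈ Ioo a' b' := ⟨by linarith [min_le_left t₀ y], by linarith [le_max_left t₀ y]⟩
  have hy' : y ∈ Icc a' b' := ⟨by linarith [min_le_right t₀ y], by linarith [le_max_right t₀ y]⟩
  have hR0 : 0 ≤ R := (norm_nonneg _).trans (hR t₀ (Ioo_subset_Icc_self ht₀'))
  refine ODE_solution_unique_of_mem_Icc (a := a') (b := b') (v := fun _ x => -|x| ^ γ)
    (fun _ _ => hK) ht₀'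
    (HasDerivAt.continuousOn fun t ht => hφ t (hsub ht))
    (fun t ht => hφ t (hsub (Ioo_subset_Icc_self ht)))
    (fun t ht => mem_closedBall_zero_iff.2 (hR t (Ioo_subset_Icc_self ht)))
    continuousOn_const (fun t _ => hzero t) (fun t _ => Metric.mem_closedBall_self hR0) hφt₀ hy'

lemma pos_of_hasDerivAt_neg_abs_rpow {γ a b c : ℝ} {φ : ℝ → ℝ} (hγ : 1 < γ)
    (hφ : ∀ t ∈ Ioo a b, HasDerivAt φ (-|φ t| ^ γ) t) (hc : c ∈ Ioo a b) (hφc : 0 < φ c) :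
    ∀ t ∈ Ioo a b, 0 < φ t := by
  intro t ht
  by_contra! hφt
  have hsub : uIcc c t ⊆ Ioo a b := ordConnected_Ioo.uIcc_subset hc ht
  obtain ⟨z, hz, hφz⟩ := intermediate_value_uIcc
    (HasDerivAt.continuousOn fun s hs => hφ s (hsub hs)) (mem_uIcc.2 (.inr ⟨hφt, hφc.le⟩))
  exact hφc.ne' (eqOn_zero_of_hasDerivAt_neg_abs_rpow hγ hφ (hsub hz) hφz hc)

lemma exists_rpow_one_sub_eq_of_hasDerivAt_neg_abs_rpow {γ a b : ℝ} {φ : ℝ → ℝ} (hγ : 1 < γ)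
    (hab : a < b) (hφ : ∀ t ∈ Ioo a b, HasDerivAt φ (-|φ t| ^ γ) t)
    (hpos : ∀ t ∈ Ioo a b, 0 < φ t) :
    ∃ k, -a ≤ k ∧ ∀ t ∈ Ioo a b, φ t ^ (1 - γ) = (γ - 1) * (t + k) := by
  have hlin : ∀ t ∈ Ioo a b, HasDerivAt (fun s => φ s ^ (1 - γ) - (γ - 1) * s) 0 t := by
    intro t ht
    have h := ((hφ t ht).rpow_const (p := 1 - γ) (.inl (hpos t ht).ne')).sub
      ((hasDerivAt_id t).const_mul (γ - 1))
    refine h.congr_deriv ?_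
    have hcancel : φ t ^ γ * φ t ^ (1 - γ - 1) = 1 := by
      rw [← Real.rpow_add (hpos t ht)]; norm_num
    rw [abs_of_pos (hpos t ht)]
    linear_combination (γ - 1) * hcancel
  obtain ⟨C, hC⟩ := isOpen_Ioo.exists_is_const_of_deriv_eq_zero isPreconnected_Ioo
    (fun t ht => (hlin t ht).differentiableAt.differentiableWithinAt)
    (fun t ht => (hlin t ht).deriv)
  have hγ0 : γ - 1 ≠ 0 := by linarith
  have hφk : ∀ t ∈ Ioo a b, φ t ^ (1 - γ) = (γ - 1) * (t + C / (γ - 1)) := fun t ht => by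
    rw [mul_add, mul_div_cancel₀ _ hγ0, ← hC t ht]
    ring
  refine ⟨C / (γ - 1), ?_, hφk⟩
  have hlim : Tendsto (fun t => (γ - 1) * (t + C / (γ - 1))) (𝓝[>] a)
      (𝓝 ((γ - 1) * (a + C / (γ - 1)))) :=
    ((continuous_const.mul (continuous_id.add continuous_const)).tendsto a).mono_left
      nhdsWithin_le_nhds
  have := ge_of_tendsto hlim (eventually_of_mem (Ioo_mem_nhdsGT hab) fun t ht =>
    (hφk t ht ▸ Real.rpow_nonneg (hpos t ht).le _))
  nlinarith

lemma hasDerivAt_flux_of_eq {p q : ℝ} (hp : 2 < p) {V : ℝ → ℝ} {s : Set ℝ} (hs : IsOpen s)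
    (hV : ContDiffOn ℝ 2 V s)
    (heq : ∀ x ∈ s, deriv (fun y => |deriv V y| ^ (p - 2) * deriv V y) x + |deriv V x| ^ q = 0) :
    ∀ x ∈ s, HasDerivAt (fun y => |deriv V y| ^ (p - 2) * deriv V y)
      (-|(|deriv V x| ^ (p - 2) * deriv V x)| ^ (q / (p - 1))) x := by
  intro x hx
  have hu : DifferentiableAt ℝ (deriv V) x :=
    ((hV.deriv_of_isOpen hs (m := 1) (by norm_num)).differentiableOn (by norm_num)).differentiableAt
      (hs.mem_nhds hx)
  have hd : DifferentiableAt ℝ (fun y => |deriv V y| ^ (p - 2) * deriv V y) x :=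
    ((hasDerivAt_abs_rpow_mul (r := p - 2) (by linarith) (deriv V x)).comp x
      hu.hasDerivAt).differentiableAt
  refine hd.hasDerivAt.congr_deriv ?_
  rw [abs_abs_rpow_mul (by linarith), ← Real.rpow_mul (abs_nonneg _),
    show (p - 2 + 1) * (q / (p - 1)) = q by field_simp [(by linarith : p - 1 ≠ 0)]; ring]
  linarith [heq x hx]

lemma eq_mul_rpow_of_flux_rpow_eq {p q u x : ℝ} (hp : 1 < p) (hq : p < q) (hx : 0 < x)
    (hφ : 0 < |u| ^ (p - 2) * u)
    (h : (|u| ^ (p - 2) * u) ^ (1 - q / (p - 1)) = (q / (p - 1) - 1) * x) :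
    u = (q - p + 1) / (q - p) * ((q - p + 1) / (p - 1)) ^ (-(1 / (q - p + 1))) *
      ((q - p) / (q - p + 1)) * x ^ ((q - p) / (q - p + 1) - 1) := by
  have hu := (abs_rpow_mul_pos_iff _ _).1 hφ
  have hp1 : p - 1 ≠ 0 := by linarith
  have hβ : q - p + 1 ≠ 0 := by linarith
  rw [abs_of_pos hu, ← Real.rpow_add_one hu.ne', ← Real.rpow_mul hu.le,
    show (p - 2 + 1) * (1 - q / (p - 1)) = -(q - p + 1) by field_simp; ring,
    show q / (p - 1) - 1 = (q - p + 1) / (p - 1) by field_simp; ring] at h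
  calc u = (u ^ (-(q - p + 1))) ^ (-(1 / (q - p + 1))) := by
        rw [← Real.rpow_mul hu.le, show -(q - p + 1) * -(1 / (q - p + 1)) = 1 by field_simp,
          Real.rpow_one]
    _ = _ := by
        rw [h, Real.mul_rpow (by positivity) hx.le,
          show (q - p) / (q - p + 1) - 1 = -(1 / (q - p + 1)) by field_simp; ring]
        field_simp [(by linarith : q - p ≠ 0)]

lemma hasDerivAt_const_mul_add_rpow_sub {A k t : ℝ} (c : ℝ) (ht : 0 < t + k) :
    HasDerivAt (fun x => c * ((x + k) ^ A - k ^ A)) (c * A * (t + k) ^ (A - 1)) t := by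
  have h := (((hasDerivAt_id t).add_const k).rpow_const (p := A) (.inl ht.ne')).sub_const (k ^ A)
  simpa [mul_assoc] using h.const_mul c

lemma eqOn_Icc_of_hasDerivAt_eq {f g f' : ℝ → ℝ} {a b : ℝ} (hf : ContinuousOn f (Icc a b))
    (hg : ContinuousOn g (Icc a b)) (hf' : ∀ t ∈ Ioo a b, HasDerivAt f (f' t) t)
    (hg' : ∀ t ∈ Ioo a b, HasDerivAt g (f' t) t) (ha : f a = g a) : EqOn f g (Icc a b) := by
  intro x hx
  rcases hx.1.eq_or_lt with rfl | hax
  · exact ha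
  obtain ⟨c, -, hc⟩ := exists_hasDerivAt_eq_slope (fun t => f t - g t) 0 hax (hf.sub hg |>.mono
    (Icc_subset_Icc_right hx.2)) fun t ht =>
      ((hf' t ⟨ht.1, ht.2.trans_le hx.2⟩).sub (hg' t ⟨ht.1, ht.2.trans_le hx.2⟩)).congr_deriv
        (sub_self _)
  rw [Pi.zero_apply, eq_comm, div_eq_zero_iff] at hc
  rcases hc with hc | hc <;> linarith

lemma strictAntiOn_one_add_rpow_sub_rpow {A : ℝ} (hA0 : 0 < A) (hA1 : A < 1) :
    StrictAntiOn (fun y : ℝ => (1 + y) ^ A - y ^ A) (Ioi 0) := by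
  have hd : ∀ y : ℝ, 0 < y → HasDerivAt (fun y : ℝ => (1 + y) ^ A - y ^ A)
      (A * (1 + y) ^ (A - 1) - A * y ^ (A - 1)) y := fun y hy => by
    have h1 : HasDerivAt (fun y : ℝ => (1 + y) ^ A) (A * (1 + y) ^ (A - 1)) y := by
      simpa using ((hasDerivAt_id y).const_add 1).rpow_const (p := A) (.inl (by positivity))
    exact h1.sub (Real.hasDerivAt_rpow_const (.inl hy.ne'))
  refine strictAntiOn_of_deriv_neg (convex_Ioi 0)
    (fun y hy => (hd y hy).continuousAt.continuousWithinAt) fun y hy => ?_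
  rw [interior_Ioi] at hy
  rw [(hd y hy).deriv, sub_neg]
  exact mul_lt_mul_of_pos_left (Real.rpow_lt_rpow_of_neg hy (by linarith) (by linarith)) hA0

theorem stmt_5_general (p q M Mb : ℝ) (hp : 2 < p) (hq : p < q)
    (hMb : Mb = ((q - p + 1) / (q - p)) * ((q - p + 1) / (p - 1)) ^ (-(1 / (q - p + 1))))
    (hM : 0 < M) (hMMb : M < Mb)
    (V : ℝ → ℝ)
    (hVcont : ContinuousOn V (Set.Icc 0 1))
    (hVC2 : ContDiffOn ℝ 2 V (Set.Ioo 0 1))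
    (heq : ∀ x ∈ Set.Ioo (0 : ℝ) 1,
      deriv (fun y => |deriv V y| ^ (p - 2) * deriv V y) x + |deriv V x| ^ q = 0)
    (hV0 : V 0 = 0) (hV1 : V 1 = M) :
    ∃! k : ℝ, 0 < k ∧
      Mb * ((1 + k) ^ ((q - p) / (q - p + 1)) - k ^ ((q - p) / (q - p + 1))) = M ∧
      ∀ x ∈ Set.Icc (0 : ℝ) 1,
        V x = Mb * ((x + k) ^ ((q - p) / (q - p + 1)) - k ^ ((q - p) / (q - p + 1))) := by
  set A := (q - p) / (q - p + 1) with hA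
  have hA0 : 0 < A := div_pos (by linarith) (by linarith)
  have hA1 : A < 1 := (div_lt_one (by linarith)).2 (by linarith)
  have hγ : 1 < q / (p - 1) := (one_lt_div (by linarith)).2 (by linarith)
  have hVd : ∀ t ∈ Ioo (0 : ℝ) 1, HasDerivAt V (deriv V t) t := fun t ht =>
    ((hVC2.differentiableOn (by norm_num)).differentiableAt (isOpen_Ioo.mem_nhds ht)).hasDerivAt
  have hφ := hasDerivAt_flux_of_eq hp isOpen_Ioo hVC2 heq
  obtain ⟨c, hc, hVc⟩ := exists_hasDerivAt_eq_slope V (deriv V) zero_lt_one hVcont hVd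
  have hpos := pos_of_hasDerivAt_neg_abs_rpow hγ hφ hc
    ((abs_rpow_mul_pos_iff _ _).2 (by rw [hVc, hV0, hV1]; simpa using hM))
  obtain ⟨k, hk0, hk⟩ := exists_rpow_one_sub_eq_of_hasDerivAt_neg_abs_rpow hγ zero_lt_one hφ hpos
  rw [neg_zero] at hk0
  have hderiv : ∀ t ∈ Ioo (0 : ℝ) 1, deriv V t = Mb * A * (t + k) ^ (A - 1) := fun t ht => by
    rw [hMb]
    exact eq_mul_rpow_of_flux_rpow_eq (by linarith) hq (by linarith [ht.1]) (hpos t ht) (hk t ht)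
  have hVW : EqOn V (fun x => Mb * ((x + k) ^ A - k ^ A)) (Icc 0 1) :=
    eqOn_Icc_of_hasDerivAt_eq hVcont (by fun_prop (disch := exact hA0.le)) hVd
      (fun t ht => hderiv t ht ▸ hasDerivAt_const_mul_add_rpow_sub Mb (by linarith [ht.1]))
      (by simp [hV0])
  have hk1 : Mb * ((1 + k) ^ A - k ^ A) = M := (hVW (right_mem_Icc.2 zero_le_one)).symm.trans hV1
  have hkpos : 0 < k := hk0.lt_of_ne' fun hk0 => by
    rw [hk0, add_zero, Real.one_rpow, Real.zero_rpow hA0.ne', sub_zero, mul_one] at hk1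
    linarith
  refine ⟨k, ⟨hkpos, hk1, fun x hx => hVW hx⟩, fun k' ⟨hk'0, hk'1, _⟩ => ?_⟩
  exact (strictAntiOn_one_add_rpow_sub_rpow hA0 hA1).injOn hk'0 hkpos
    (mul_left_cancel₀ (by linarith) (hk'1.trans hk1.symm))

theorem stmt_5 (p q M Mb : ℝ) (hp : 2 < p) (hq : p < q)
    (hMb : Mb = ((q - p + 1) / (q - p)) * ((q - p + 1) / (p - 1)) ^ (-(1 / (q - p + 1))))
    (hM : 0 < M) (hMMb : M < Mb)
    (V : ℝ → ℝ)
    (hVcont : ContinuousOn V (Set.Icc 0 1))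
    (hVC2 : ContDiffOn ℝ 2 V (Set.Ioo 0 1))
    (hVnonneg : ∀ x ∈ Set.Icc (0 : ℝ) 1, 0 ≤ V x)
    (heq : ∀ x ∈ Set.Ioo (0 : ℝ) 1,
      deriv (fun y => |deriv V y| ^ (p - 2) * deriv V y) x + |deriv V x| ^ q = 0)
    (hV0 : V 0 = 0) (hV1 : V 1 = M) :
    ∃! k : ℝ, 0 < k ∧
      Mb * ((1 + k) ^ ((q - p) / (q - p + 1)) - k ^ ((q - p) / (q - p + 1))) = M ∧
      ∀ x ∈ Set.Icc (0 : ℝ) 1,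
        V x = Mb * ((x + k) ^ ((q - p) / (q - p + 1)) - k ^ ((q - p) / (q - p + 1))) :=
  stmt_5_general p q M Mb hp hq hMb hM hMMb V hVcont hVC2 heq hV0 hV1
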